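/- Let φ : ℝ → ℝ be a measurable odd function with 0 ≤ φ(x) ≤ 1 for x > 0, φ(x) = 1 for 0 < x ≤ 1, and φ(x) = 0 for x ≥ 2. Let (x_k), (y_k) be real sequences with x_k ≠ 0, y_k > 0, y_k → 0, |x_{k+1}| ≤ |x_k|/2, y_{k+1} ≤ y_k, |x_k| ≥ 6·√(y_k), such that the intervals [x_k − 2√(y_k), x_k + 2√(y_k)] are pairwise disjoint and Σ_k y_k/x_k² < ∞. Define ψ(x) = Σ_k φ((x − x_k)/√(y_k)). Then |ψ(x)| ≤ 1 for all x ∈ ℝ, ψ is integrable with compact support, and liminf_{n→∞} |G_ψ(x_n + i·y_n)| / log(1/y_n) ≥ 1/π, where G_ψ(z) = (1/(πi))∫_ℝ ψ(t)/(z − t) dt for z ∈ ℍ. -/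

import Mathlib

open MeasureTheory Real Complex Filter
open scoped Topology

noncomputable section

/-- `G_ψ(z) = (1/(πi)) ∫_ℝ ψ(t)/(z - t) dt`, the analytic extension `ψ + iHψ`
of an integrable `ψ : ℝ → ℝ` to the upper half-plane. -/
noncomputable def UHG (ψ : ℝ → ℝ) (z : ℂ) : ℂ :=
  ((Real.pi : ℂ) * Complex.I)⁻¹ • ∫ t : ℝ, ((ψ t : ℂ) / (z - (t : ℂ)))

/-- The hypotheses on the bump function `φ`: measurable, odd, `0 ≤ φ ≤ 1` on `(0,∞)`,
`φ = 1` on `(0,1]` and `φ = 0` on `[2,∞)`. -/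
def IsPhi (φ : ℝ → ℝ) : Prop :=
  Measurable φ ∧ (∀ x : ℝ, φ (-x) = - φ x) ∧ (∀ x : ℝ, 0 < x → 0 ≤ φ x ∧ φ x ≤ 1) ∧
    (∀ x : ℝ, 0 < x → x ≤ 1 → φ x = 1) ∧ (∀ x : ℝ, 2 ≤ x → φ x = 0)

/-!
The bumps `φ ((s - x k) / √(y k))` have disjoint supports, so their sum `ψ` is bounded by `1`,
and they all lie in `[-2|x 0|, 2|x 0|]`. Since `φ` is odd, pairing `u` with `-u` turns the
Cauchy integral of a bump of width `r` into `∫₀^{2r} φ(u/r) · 2u / ((w - u)(w + u)) du`.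
For the `n`-th bump seen from `x n + i y n` (so `w = i y n`, `r² = y n`) the integrand is
`-2u φ(u/r) / (u² + (y n)²)`, and its part over `(0, r]` alone already has size `log (1 / y n)`.
For `k ≠ n` the lacunarity `|x (k+1)| ≤ |x k| / 2` gives `|x n - x k| ≥ |x k| / 2`, so the
`k`-th term is at most `144 y k / (x k)²`, which is summable.
Hence `π ‖G_ψ(x n + i y n)‖ ≥ log (1 / y n) - O(1)`.
-/

open Set Function

theorem HasCompactSupport.integrable_of_bound {X E : Type*} [TopologicalSpace X]
    [MeasurableSpace X] [NormedAddCommGroup E] {μ : Measure X} [IsFiniteMeasureOnCompacts μ]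
    {f : X → E} (hf : HasCompactSupport f) (hm : AEStronglyMeasurable f μ) {C : ℝ}
    (hC : ∀ x, ‖f x‖ ≤ C) : Integrable f μ :=
  (integrableOn_iff_integrable_of_support_subset (subset_tsupport f)).1 <|
    IntegrableOn.of_bound hf.isCompact.measure_lt_top hm.restrict C (ae_of_all _ hC)

theorem measurable_tsum_of_summable {α : Type*} [MeasurableSpace α] {f : ℕ → α → ℝ}
    (hf : ∀ k, Measurable (f k)) (hs : ∀ a, Summable fun k => f k a) :
    Measurable fun a => ∑' k, f k a :=
  measurable_of_tendsto_metrizable (fun _ => Finset.measurable_sum _ fun k _ => hf k)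
    (tendsto_pi_nhds.2 fun a => (hs a).hasSum.tendsto_sum_nat)

theorem exists_hasSum_of_pairwise_disjoint_support {ι α M : Type*} [Nonempty ι]
    [AddCommMonoid M] [TopologicalSpace M] {f : ι → α → M} {A : ι → Set α}
    (hA : Pairwise (Disjoint on A)) (hf : ∀ i, support (f i) ⊆ A i) (a : α) :
    ∃ i, HasSum (fun j => f j a) (f i a) := by
  by_cases ha : ∃ i, a ∈ A i
  · obtain ⟨i, hai⟩ := ha
    exact ⟨i, hasSum_single i fun j hji =>
      notMem_support.1 fun haj => disjoint_left.1 (hA hji) (hf j haj) hai⟩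
  · have hzero : ∀ j, f j a = 0 := fun j =>
      notMem_support.1 fun haj => ha ⟨j, hf j haj⟩
    exact ⟨Classical.arbitrary ι, by simpa only [hzero] using hasSum_zero⟩

theorem integral_eq_integral_Ioi_add_comp_neg {E : Type*} [NormedAddCommGroup E]
    [NormedSpace ℝ E] {G : ℝ → E} (hG : Integrable G) :
    ∫ u, G u = ∫ u in Ioi 0, (G u + G (-u)) := by
  rw [integral_add hG.integrableOn hG.comp_neg.integrableOn, integral_comp_neg_Ioi, neg_zero,
    add_comm, intervalIntegral.integral_Iic_add_Ioi hG.integrableOn hG.integrableOn]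

theorem norm_sub_tsum_le_norm_tsum {ι E : Type*} [DecidableEq ι] [NormedAddCommGroup E]
    [CompleteSpace E] {J : ι → E} {b : ι → ℝ} (i : ι) (hb : Summable b) (hb0 : ∀ j, 0 ≤ b j)
    (hJ : ∀ j ≠ i, ‖J j‖ ≤ b j) : ‖J i‖ - ∑' j, b j ≤ ‖∑' j, J j‖ := by
  have hrest : ∀ j, ‖ite (j = i) 0 (J j)‖ ≤ b j := fun j => by
    split_ifs with h
    · simpa using hb0 j
    · exact hJ j h
  have hJs : Summable J := by
    refine ((hb.of_norm_bounded hrest).update i (J i)).congr fun j => ?_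
    by_cases h : j = i <;> simp [h, Function.update]
  rw [hJs.tsum_eq_add_tsum_ite i]
  have h := norm_sub_le (J i + ∑' j, ite (j = i) 0 (J j)) (∑' j, ite (j = i) 0 (J j))
  rw [add_sub_cancel_right] at h
  linarith [tsum_of_norm_bounded hb.hasSum hrest]

theorem eventually_inv_sub_le_div {ι : Type*} {l : Filter ι} {a L : ι → ℝ} {c C : ℝ}
    (hc : 0 < c) (hL : Tendsto L l atTop) (ha : ∀ i, L i - C ≤ c * a i) {ε : ℝ} (hε : 0 < ε) :
    ∀ᶠ i in l, 1 / c - ε ≤ a i / L i := by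
  have hlim : Tendsto (fun i => 1 / c - C / c * (L i)⁻¹) l (𝓝 (1 / c)) := by
    simpa using tendsto_const_nhds.sub (tendsto_const_nhds.mul hL.inv_tendsto_atTop)
  filter_upwards [hlim.eventually (Ioi_mem_nhds (by linarith : 1 / c - ε < 1 / c)),
    hL.eventually_gt_atTop 0] with i hi hLi
  refine hi.le.trans ?_
  rw [le_div_iff₀ hLi, show (1 / c - C / c * (L i)⁻¹) * L i = (L i - C) / c by field_simp,
    div_le_iff₀ hc, mul_comm]
  exact ha i

section Lacunary

variable {x : ℕ → ℝ}

theorem antitone_abs_of_abs_succ_le_half (hx : ∀ k, |x (k + 1)| ≤ |x k| / 2) :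
    Antitone fun k => |x k| :=
  antitone_nat_of_succ_le fun k => (hx k).trans (half_le_self (abs_nonneg _))

theorem abs_le_half_of_abs_succ_le_half (hx : ∀ k, |x (k + 1)| ≤ |x k| / 2) {k l : ℕ}
    (hkl : k < l) : |x l| ≤ |x k| / 2 :=
  (antitone_abs_of_abs_succ_le_half hx hkl).trans (hx k)

theorem half_abs_le_abs_sub_of_abs_succ_le_half (hx : ∀ k, |x (k + 1)| ≤ |x k| / 2)
    {k n : ℕ} (hkn : k ≠ n) : |x k| / 2 ≤ |x n - x k| := by
  have h₁ := abs_sub_abs_le_abs_sub (x n) (x k)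
  have h₂ := abs_sub_abs_le_abs_sub (x k) (x n)
  rw [abs_sub_comm] at h₂
  rcases hkn.lt_or_gt with h | h
  · linarith [abs_le_half_of_abs_succ_le_half hx h]
  · linarith [abs_le_half_of_abs_succ_le_half hx h, abs_nonneg (x k)]

theorem summable_of_abs_succ_le_half (hx : ∀ k, |x (k + 1)| ≤ |x k| / 2) : Summable x :=
  summable_of_ratio_norm_eventually_le (r := 1 / 2) (by norm_num)
    (Eventually.of_forall fun k => by simpa only [Real.norm_eq_abs, one_div_mul_eq_div] using hx k)

end Lacunary

namespace IsPhi

variable {φ : ℝ → ℝ}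

theorem abs_le_one (hφ : IsPhi φ) (u : ℝ) : |φ u| ≤ 1 := by
  obtain ⟨-, hodd, hbd, -, -⟩ := hφ
  have hpos : ∀ v, 0 < v → |φ v| ≤ 1 := fun v hv =>
    abs_le.2 ⟨by linarith [(hbd v hv).1], (hbd v hv).2⟩
  rcases lt_trichotomy u 0 with hu | rfl | hu
  · rw [← neg_neg u, hodd, abs_neg]
    exact hpos _ (neg_pos.2 hu)
  · have h0 := hodd 0
    rw [neg_zero] at h0
    rw [show φ 0 = 0 by linarith]
    norm_num
  · exact hpos u hu

theorem eq_zero_of_two_le_abs (hφ : IsPhi φ) {u : ℝ} (hu : 2 ≤ |u|) : φ u = 0 := by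
  obtain ⟨-, hodd, -, -, hzero⟩ := hφ
  rcases le_abs'.1 hu with hu | hu
  · rw [← neg_neg u, hodd, hzero _ (by linarith), neg_zero]
  · exact hzero u hu

theorem hasCompactSupport (hφ : IsPhi φ) : HasCompactSupport φ :=
  HasCompactSupport.intro (isCompact_Icc (a := -2) (b := 2)) fun _ hu =>
    hφ.eq_zero_of_two_le_abs (not_le.1 (mt abs_le.1 hu)).le

theorem integrable (hφ : IsPhi φ) : Integrable φ :=
  hφ.hasCompactSupport.integrable_of_bound hφ.1.aestronglyMeasurable fun u =>
    (Real.norm_eq_abs _).trans_le (hφ.abs_le_one u)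

theorem support_comp_sub_div_subset (hφ : IsPhi φ) (c : ℝ) {r : ℝ} (hr : 0 < r) :
    support (fun s => φ ((s - c) / r)) ⊆ Icc (c - 2 * r) (c + 2 * r) := by
  intro s hs
  by_contra hsI
  refine hs (hφ.eq_zero_of_two_le_abs ?_)
  rw [abs_div, abs_of_pos hr, le_div_iff₀ hr]
  rw [mem_Icc, not_and_or, not_le, not_le] at hsI
  exact le_abs'.2 (hsI.imp (fun h => by linarith) fun h => by linarith)

end IsPhi

theorem abs_im_le_norm_sub_ofReal (w : ℂ) (u : ℝ) : |w.im| ≤ ‖w - u‖ := by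
  simpa using abs_im_le_norm (w - u)

theorem abs_re_sub_abs_le_norm_sub_ofReal (w : ℂ) (u : ℝ) : |w.re| - |u| ≤ ‖w - u‖ :=
  calc |w.re| - |u| ≤ |w.re - u| := abs_sub_abs_le_abs_sub _ _
    _ ≤ ‖w - u‖ := by simpa using abs_re_le_norm (w - u)

section CauchyTransform

variable {f : ℝ → ℝ} {w : ℂ}

theorem MeasureTheory.Integrable.ofReal_div_sub (hf : Integrable f) (hw : w.im ≠ 0) :
    Integrable fun u : ℝ => (f u : ℂ) / (w - u) := by
  simp_rw [div_eq_mul_inv]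
  refine hf.ofReal.mul_bdd (c := |w.im|⁻¹) (by fun_prop) (ae_of_all _ fun u => ?_)
  rw [norm_inv]
  exact inv_anti₀ (abs_pos.2 hw) (abs_im_le_norm_sub_ofReal w u)

theorem integral_norm_ofReal_div_sub_le (hf : Integrable f) (hw : w.im ≠ 0) :
    ∫ u : ℝ, ‖(f u : ℂ) / (w - u)‖ ≤ (∫ u, |f u|) / |w.im| := by
  rw [← integral_div]
  refine integral_mono (hf.ofReal_div_sub hw).norm (hf.abs.div_const _) fun u => ?_
  rw [norm_div, Complex.norm_real, Real.norm_eq_abs]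
  exact div_le_div_of_nonneg_left (abs_nonneg _) (abs_pos.2 hw) (abs_im_le_norm_sub_ofReal w u)

end CauchyTransform

/-- Up to the factor `π i`, the value at `w` of `UHG` of the bump `u ↦ φ (u / r)`. -/
def cauchyBump (φ : ℝ → ℝ) (r : ℝ) (w : ℂ) : ℂ :=
  ∫ u : ℝ, (φ (u / r) : ℂ) / (w - u)

theorem integral_comp_sub_div_div_sub (φ : ℝ → ℝ) (c r : ℝ) (z : ℂ) :
    ∫ t : ℝ, (φ ((t - c) / r) : ℂ) / (z - t) = cauchyBump φ r (z - c) := by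
  rw [cauchyBump, ← integral_sub_right_eq_self (fun u : ℝ => (φ (u / r) : ℂ) / (z - c - u)) c]
  congr 1 with t
  push_cast
  ring_nf

namespace IsPhi

variable {φ : ℝ → ℝ} {r : ℝ} {w : ℂ}

theorem cauchyBump_eq_integral_Ioi (hφ : IsPhi φ) (hr : r ≠ 0) (hw : w.im ≠ 0) :
    cauchyBump φ r w = ∫ u in Ioi 0, (φ (u / r) : ℂ) * (2 * u / ((w - u) * (w + u))) := by
  rw [cauchyBump, integral_eq_integral_Ioi_add_comp_neg
    ((hφ.integrable.comp_div hr).ofReal_div_sub hw)]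
  congr 1 with u
  have hsub : w - u ≠ 0 := fun h => hw (by simpa using congrArg im h)
  have hadd : w + u ≠ 0 := fun h => hw (by simpa using congrArg im h)
  rw [neg_div, hφ.2.1, ofReal_neg, ofReal_neg, sub_neg_eq_add]
  field_simp
  ring

theorem norm_cauchyBump_le (hφ : IsPhi φ) (hr : 0 < r) (hw : w.im ≠ 0) {d : ℝ} (hd : 0 < d)
    (hdw : 2 * r + d ≤ |w.re|) : ‖cauchyBump φ r w‖ ≤ 4 * r ^ 2 / d ^ 2 := by
  have hbound : ∀ u ∈ Ioi (0 : ℝ), ‖(φ (u / r) : ℂ) * (2 * u / ((w - u) * (w + u)))‖ ≤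
      (Ioc 0 (2 * r)).indicator (fun u => 2 * u / d ^ 2) u := by
    intro u (hu : 0 < u)
    by_cases hur : u ≤ 2 * r
    · have hsub : d ≤ ‖w - u‖ := by
        linarith [abs_re_sub_abs_le_norm_sub_ofReal w u, abs_of_pos hu]
      have hadd : d ≤ ‖w + u‖ := by
        have := abs_re_sub_abs_le_norm_sub_ofReal w (-u)
        rw [ofReal_neg, sub_neg_eq_add, abs_neg] at this
        linarith [abs_of_pos hu]
      rw [indicator_of_mem (mem_Ioc.2 ⟨hu, hur⟩), norm_mul, norm_div, norm_mul, norm_mul,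
        Complex.norm_real, Complex.norm_real, Real.norm_of_nonneg hu.le, Complex.norm_two, sq]
      calc ‖φ (u / r)‖ * (2 * u / (‖w - u‖ * ‖w + u‖)) ≤ 1 * (2 * u / (d * d)) := by
            gcongr
            exact hφ.abs_le_one _
        _ = 2 * u / (d * d) := one_mul _
    · have hzero : φ (u / r) = 0 := hφ.eq_zero_of_two_le_abs <| by
        rw [abs_div, abs_of_pos hu, abs_of_pos hr, le_div_iff₀ hr]
        linarith
      rw [indicator_of_notMem fun h => hur h.2, hzero]
      simp
  have hint : Integrable ((Ioc 0 (2 * r)).indicator fun u : ℝ => 2 * u / d ^ 2) :=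
    (continuous_const.mul continuous_id |>.div_const _).integrableOn_Ioc.integrable_indicator
      measurableSet_Ioc
  rw [hφ.cauchyBump_eq_integral_Ioi hr.ne' hw]
  calc _ ≤ ∫ u in Ioi 0, (Ioc 0 (2 * r)).indicator (fun u => 2 * u / d ^ 2) u :=
        norm_integral_le_of_norm_le hint.integrableOn
          (ae_restrict_of_forall_mem measurableSet_Ioi hbound)
    _ = ∫ u in (0)..(2 * r), 2 * u / d ^ 2 := by
        rw [setIntegral_indicator measurableSet_Ioc,
          inter_eq_self_of_subset_right Ioc_subset_Ioi_self,
          intervalIntegral.integral_of_le (by positivity)]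
    _ = 4 * r ^ 2 / d ^ 2 := by
        rw [intervalIntegral.integral_div, intervalIntegral.integral_const_mul, integral_id]
        ring

theorem log_inv_le_norm_cauchyBump (hφ : IsPhi φ) {Y : ℝ} (hY : 0 < Y) :
    Real.log (1 / Y) ≤ ‖cauchyBump φ (Real.sqrt Y) (Y * I)‖ := by
  set r := Real.sqrt Y
  have hr : 0 < r := Real.sqrt_pos.2 hY
  set g : ℝ → ℝ := fun u => φ (u / r) * (2 * u / (u ^ 2 + Y ^ 2))
  have hw : ((Y : ℂ) * I).im ≠ 0 := by simpa using hY.ne'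
  have hg_eq : ∀ u : ℝ,
      (φ (u / r) : ℂ) * (2 * u / ((Y * I - u) * (Y * I + u))) = ((-g u : ℝ) : ℂ) := by
    intro u
    have hden : ((Y : ℂ) * I - u) * (Y * I + u) = -((u ^ 2 + Y ^ 2 : ℝ) : ℂ) := by
      push_cast
      linear_combination (Y : ℂ) ^ 2 * I_sq
    have hne : ((u ^ 2 + Y ^ 2 : ℝ) : ℂ) ≠ 0 := ofReal_ne_zero.2 (by positivity)
    rw [hden]
    simp only [g]
    push_cast
    field_simp
  have hg_nonneg : ∀ u ∈ Ioi (0 : ℝ), 0 ≤ g u := fun u (hu : 0 < u) =>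
    mul_nonneg (hφ.2.2.1 _ (div_pos hu hr)).1 (by positivity)
  have hg_int : Integrable g := by
    refine (hφ.integrable.comp_div hr.ne').mul_bdd (c := 1 / Y)
      (by fun_prop : Measurable fun u : ℝ => 2 * u / (u ^ 2 + Y ^ 2)).aestronglyMeasurable
      (ae_of_all _ fun u => ?_)
    rw [Real.norm_eq_abs, abs_div, abs_of_pos (by positivity : 0 < u ^ 2 + Y ^ 2),
      div_le_div_iff₀ (by positivity) hY, abs_mul, abs_two]
    nlinarith [sq_nonneg (|u| - Y), sq_abs u]
  have hg_Ioc : ∀ u ∈ Ioc 0 r, g u = 2 * u / (u ^ 2 + Y ^ 2) := fun u hu => by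
    simp only [g, hφ.2.2.2.1 _ (div_pos hu.1 hr) ((div_le_one hr).2 hu.2), one_mul]
  have hderiv : ∀ u ∈ uIcc 0 r,
      HasDerivAt (fun v => Real.log (v ^ 2 + Y ^ 2)) (2 * u / (u ^ 2 + Y ^ 2)) u := by
    intro u _
    convert ((hasDerivAt_pow 2 u).add_const (Y ^ 2)).log (by positivity) using 1
    ring
  have hlog : Real.log (1 / Y) ≤ Real.log (r ^ 2 + Y ^ 2) - Real.log (0 ^ 2 + Y ^ 2) := by
    rw [Real.sq_sqrt hY.le, zero_pow two_ne_zero, zero_add, one_div, Real.log_inv,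
      Real.log_pow]
    have := Real.log_le_log hY (le_add_of_nonneg_right (sq_nonneg Y))
    push_cast
    linarith
  calc Real.log (1 / Y)
      ≤ ∫ u in (0)..r, 2 * u / (u ^ 2 + Y ^ 2) := by
        rwa [intervalIntegral.integral_eq_sub_of_hasDerivAt hderiv
          (Continuous.intervalIntegrable
            (.div (by fun_prop) (by fun_prop) fun u => by positivity) _ _)]
    _ = ∫ u in Ioc 0 r, g u := by
        rw [intervalIntegral.integral_of_le hr.le]
        exact (setIntegral_congr_fun measurableSet_Ioc hg_Ioc).symm
    _ ≤ ∫ u in Ioi 0, g u :=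
        setIntegral_mono_set hg_int.integrableOn
          ((ae_restrict_iff' measurableSet_Ioi).2 (ae_of_all _ hg_nonneg))
          Ioc_subset_Ioi_self.eventuallyLE
    _ = ‖cauchyBump φ r (Y * I)‖ := by
        rw [hφ.cauchyBump_eq_integral_Ioi hr.ne' hw]
        simp_rw [hg_eq]
        rw [integral_complex_ofReal, integral_neg, ofReal_neg, norm_neg, Complex.norm_real,
          Real.norm_of_nonneg (setIntegral_nonneg measurableSet_Ioi hg_nonneg)]

end IsPhi

theorem pi_mul_norm_UHG (ψ : ℝ → ℝ) (z : ℂ) :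
    π * ‖UHG ψ z‖ = ‖∫ t : ℝ, (ψ t : ℂ) / (z - t)‖ := by
  rw [UHG, norm_smul, norm_inv, norm_mul, norm_I, mul_one, Complex.norm_real,
    Real.norm_of_nonneg pi_pos.le, mul_inv_cancel_left₀ pi_ne_zero]

theorem IsPhi.integral_tsum_div_sub {φ : ℝ → ℝ} (hφ : IsPhi φ) {c r : ℕ → ℝ}
    (hr : ∀ k, 0 < r k) (hrs : Summable r) {z : ℂ} (hz : z.im ≠ 0) :
    ∫ t : ℝ, ((∑' k, φ ((t - c k) / r k) : ℝ) : ℂ) / (z - t) =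
      ∑' k, cauchyBump φ (r k) (z - c k) := by
  have hf : ∀ k, Integrable fun t => φ ((t - c k) / r k) := fun k =>
    (hφ.integrable.comp_div (hr k).ne').comp_sub_right (c k)
  have hsum : Summable fun k => ∫ t : ℝ, ‖(φ ((t - c k) / r k) : ℂ) / (z - t)‖ := by
    refine .of_nonneg_of_le (fun k => integral_nonneg fun t => norm_nonneg _)
      (fun k => (integral_norm_ofReal_div_sub_le (hf k) hz).trans_eq ?_)
      ((hrs.mul_right (∫ u, |φ u|)).div_const |z.im|)
    rw [integral_sub_right_eq_self (fun t => |φ (t / r k)|) (c k),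
      Measure.integral_comp_div (fun u => |φ u|), abs_of_pos (hr k), smul_eq_mul]
  simp_rw [← integral_comp_sub_div_div_sub, ofReal_tsum, ← tsum_div_const]
  exact (integral_tsum_of_summable_integral_norm (fun k => (hf k).ofReal_div_sub hz) hsum).symm

section BumpSum

variable {φ : ℝ → ℝ} {c r : ℕ → ℝ}

theorem IsPhi.abs_tsum_bumps_le_one (hφ : IsPhi φ) (hr : ∀ k, 0 < r k)
    (hdisj : Pairwise fun k l => Disjoint (Icc (c k - 2 * r k) (c k + 2 * r k))
      (Icc (c l - 2 * r l) (c l + 2 * r l))) (s : ℝ) :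
    |∑' k, φ ((s - c k) / r k)| ≤ 1 := by
  obtain ⟨k, hk⟩ := exists_hasSum_of_pairwise_disjoint_support hdisj
    (fun k => hφ.support_comp_sub_div_subset (c k) (hr k)) s
  rw [hk.tsum_eq]
  exact hφ.abs_le_one _

theorem IsPhi.hasCompactSupport_tsum_bumps (hφ : IsPhi φ) (hr : ∀ k, 0 < r k) {R : ℝ}
    (hR : ∀ k, |c k| + 2 * r k ≤ R) :
    HasCompactSupport fun s => ∑' k, φ ((s - c k) / r k) := by
  have hsupp : support (fun s => ∑' k, φ ((s - c k) / r k)) ⊆ Icc (-R) R := by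
    intro s hs
    obtain ⟨k, hk⟩ : ∃ k, φ ((s - c k) / r k) ≠ 0 := by
      by_contra! h
      exact hs (by simp only [h, tsum_zero])
    have hsk := hφ.support_comp_sub_div_subset (c k) (hr k) hk
    exact ⟨by linarith [hsk.1, hR k, neg_abs_le (c k)],
      by linarith [hsk.2, hR k, le_abs_self (c k)]⟩
  exact isCompact_Icc.of_isClosed_subset (isClosed_tsupport _)
    (closure_minimal hsupp isClosed_Icc)

theorem IsPhi.integrable_tsum_bumps (hφ : IsPhi φ) (hr : ∀ k, 0 < r k)
    (hdisj : Pairwise fun k l => Disjoint (Icc (c k - 2 * r k) (c k + 2 * r k))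
      (Icc (c l - 2 * r l) (c l + 2 * r l))) {R : ℝ} (hR : ∀ k, |c k| + 2 * r k ≤ R) :
    Integrable fun s => ∑' k, φ ((s - c k) / r k) := by
  have hmeas : Measurable fun s => ∑' k, φ ((s - c k) / r k) :=
    measurable_tsum_of_summable (fun k => hφ.1.comp (by fun_prop)) fun s =>
      (exists_hasSum_of_pairwise_disjoint_support hdisj
        (fun k => hφ.support_comp_sub_div_subset (c k) (hr k)) s).choose_spec.summable
  exact (hφ.hasCompactSupport_tsum_bumps hr hR).integrable_of_bound hmeas.aestronglyMeasurable
    fun s => (Real.norm_eq_abs _).trans_le (hφ.abs_tsum_bumps_le_one hr hdisj s)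

end BumpSum

theorem IsPhi.log_sub_le_pi_mul_norm_UHG {φ : ℝ → ℝ} (hφ : IsPhi φ) {x y : ℕ → ℝ}
    (hy : ∀ k, 0 < y k) (hxhalf : ∀ k, |x (k + 1)| ≤ |x k| / 2)
    (hsep : ∀ k, 6 * Real.sqrt (y k) ≤ |x k|) (hsum : Summable fun k => y k / x k ^ 2) (n : ℕ) :
    Real.log (1 / y n) - 144 * ∑' k, y k / x k ^ 2 ≤
      π * ‖UHG (fun s => ∑' k, φ ((s - x k) / Real.sqrt (y k))) (x n + y n * I)‖ := by
  have hr : ∀ k, 0 < Real.sqrt (y k) := fun k => Real.sqrt_pos.2 (hy k)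
  have hx : ∀ k, 0 < |x k| := fun k => by linarith [hsep k, hr k]
  have hrs : Summable fun k => Real.sqrt (y k) :=
    .of_nonneg_of_le (fun k => (hr k).le) (fun k => by linarith [hsep k])
      ((summable_of_abs_succ_le_half hxhalf).abs.div_const 6)
  set z : ℂ := x n + y n * I
  have hz : z.im ≠ 0 := by simpa [z] using (hy n).ne'
  rw [pi_mul_norm_UHG, hφ.integral_tsum_div_sub hr hrs hz, ← tsum_mul_left]
  refine le_trans ?_ (norm_sub_tsum_le_norm_tsum n (hsum.mul_left 144)
    (fun k => by have := hy k; positivity) fun k hk => ?_)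
  · have hzn : z - x n = y n * I := by simp [z]
    rw [hzn]
    linarith [hφ.log_inv_le_norm_cauchyBump (hy n)]
  · have hdist : 2 * Real.sqrt (y k) + |x k| / 6 ≤ |(z - x k).re| := by
      simp only [z, sub_re, add_re, ofReal_re, mul_re, I_re, I_im, ofReal_im, mul_zero, zero_mul,
        sub_zero, add_zero]
      linarith [half_abs_le_abs_sub_of_abs_succ_le_half hxhalf hk, hsep k]
    calc ‖cauchyBump φ (Real.sqrt (y k)) (z - x k)‖
        ≤ 4 * Real.sqrt (y k) ^ 2 / (|x k| / 6) ^ 2 :=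
          hφ.norm_cauchyBump_le (hr k) (by simpa using hz) (by linarith [hx k]) hdist
      _ = 144 * (y k / x k ^ 2) := by
          rw [Real.sq_sqrt (hy k).le, div_pow, sq_abs]
          field_simp
          ring

theorem stmt_14_general (φ : ℝ → ℝ) (hφ : IsPhi φ) (x y : ℕ → ℝ)
    (hy : ∀ k, 0 < y k) (hy0 : Tendsto y atTop (𝓝 0))
    (hxhalf : ∀ k, |x (k + 1)| ≤ |x k| / 2)
    (hsep : ∀ k, 6 * Real.sqrt (y k) ≤ |x k|)
    (hdisj : Pairwise fun k l => Disjoint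
        (Set.Icc (x k - 2 * Real.sqrt (y k)) (x k + 2 * Real.sqrt (y k)))
        (Set.Icc (x l - 2 * Real.sqrt (y l)) (x l + 2 * Real.sqrt (y l))))
    (hsum : Summable fun k => y k / (x k) ^ 2) :
    (∀ s : ℝ, |∑' k : ℕ, φ ((s - x k) / Real.sqrt (y k))| ≤ 1) ∧
    Integrable (fun s : ℝ => ∑' k : ℕ, φ ((s - x k) / Real.sqrt (y k))) ∧
    HasCompactSupport (fun s : ℝ => ∑' k : ℕ, φ ((s - x k) / Real.sqrt (y k))) ∧
    ∀ ε > (0:ℝ), ∀ᶠ n in atTop,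
      1 / Real.pi - ε ≤
        ‖UHG (fun s : ℝ => ∑' k : ℕ, φ ((s - x k) / Real.sqrt (y k)))
            ((x n : ℂ) + (y n : ℂ) * Complex.I)‖ / Real.log (1 / y n) := by
  have hr : ∀ k, 0 < Real.sqrt (y k) := fun k => Real.sqrt_pos.2 (hy k)
  have hR : ∀ k, |x k| + 2 * Real.sqrt (y k) ≤ 2 * |x 0| := fun k => by
    linarith [hsep k, antitone_abs_of_abs_succ_le_half hxhalf (Nat.zero_le k), abs_nonneg (x k)]
  have hlog : Tendsto (fun n => Real.log (1 / y n)) atTop atTop := by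
    simp only [one_div, Real.log_inv]
    exact tendsto_neg_atBot_atTop.comp
      (tendsto_log_nhdsGT_zero.comp (tendsto_nhdsWithin_iff.2 ⟨hy0, .of_forall hy⟩))
  exact ⟨hφ.abs_tsum_bumps_le_one hr hdisj, hφ.integrable_tsum_bumps hr hdisj hR,
    hφ.hasCompactSupport_tsum_bumps hr hR, fun ε hε => eventually_inv_sub_le_div pi_pos hlog
      (hφ.log_sub_le_pi_mul_norm_UHG hy hxhalf hsep hsum) hε⟩

/-- **Second case of the construction.** With separated translates
`φ_k(s) = φ((s - x k)/√(y k))` of the bump `φ`, the sum `ψ = Σ_k φ_k` satisfies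
`|ψ| ≤ 1`, is integrable with compact support, and
`liminf |G_ψ(x n + i y n)| / log(1/y n) ≥ 1/π`. -/
theorem stmt_14 (φ : ℝ → ℝ) (hφ : IsPhi φ) (x y : ℕ → ℝ)
    (hx0 : ∀ k, x k ≠ 0) (hy : ∀ k, 0 < y k) (hy0 : Tendsto y atTop (𝓝 0))
    (hxhalf : ∀ k, |x (k + 1)| ≤ |x k| / 2) (hymono : ∀ k, y (k + 1) ≤ y k)
    (hsep : ∀ k, 6 * Real.sqrt (y k) ≤ |x k|)
    (hdisj : Pairwise fun k l => Disjoint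
        (Set.Icc (x k - 2 * Real.sqrt (y k)) (x k + 2 * Real.sqrt (y k)))
        (Set.Icc (x l - 2 * Real.sqrt (y l)) (x l + 2 * Real.sqrt (y l))))
    (hsum : Summable fun k => y k / (x k) ^ 2) :
    (∀ s : ℝ, |∑' k : ℕ, φ ((s - x k) / Real.sqrt (y k))| ≤ 1) ∧
    Integrable (fun s : ℝ => ∑' k : ℕ, φ ((s - x k) / Real.sqrt (y k))) ∧
    HasCompactSupport (fun s : ℝ => ∑' k : ℕ, φ ((s - x k) / Real.sqrt (y k))) ∧
    ∀ ε > (0:ℝ), ∀ᶠ n in atTop,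
      1 / Real.pi - ε ≤
        ‖UHG (fun s : ℝ => ∑' k : ℕ, φ ((s - x k) / Real.sqrt (y k)))
            ((x n : ℂ) + (y n : ℂ) * Complex.I)‖ / Real.log (1 / y n) :=
  stmt_14_general φ hφ x y hy hy0 hxhalf hsep hdisj hsum
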